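/- If φ is jointly convex, i.e. φ(λx₁+(1-λ)x₂, λy₁+(1-λ)y₂) ≤ λφ(x₁,y₁) + (1-λ)φ(x₂,y₂) for all λ ∈ [0,1], then the Sketch ★-metric φ̂_k is also jointly convex: φ̂_k(λp₁+(1-λ)p₂, λq₁+(1-λ)q₂) ≤ λφ̂_k(p₁,q₁) + (1-λ)φ̂_k(p₂,q₂). -/

import Mathlib

open Finset

/-- The projection of a distribution `p` on `Ω` onto the cells of a partition `ρ`. -/
noncomputable def proj {Ω : Type*} [Fintype Ω] [DecidableEq Ω]
    (ρ : Finpartition (univ : Finset Ω)) (p : Ω → ℝ) : Finset Ω → ℝ :=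
  fun a => if a ∈ ρ.parts then ∑ i ∈ a, p i else 0

lemma proj_mul_add_mul {Ω : Type*} [Fintype Ω] [DecidableEq Ω]
    (ρ : Finpartition (univ : Finset Ω)) (p q : Ω → ℝ) (s t : ℝ) :
    proj ρ (fun i => s * p i + t * q i) = fun a => s * proj ρ p a + t * proj ρ q a := by
  funext a
  by_cases ha : a ∈ ρ.parts <;> simp [proj, ha, sum_add_distrib, mul_sum]

lemma Finset.sup'_le_mul_sup'_add_mul_sup' {ι : Type*} {S : Finset ι} (hS : S.Nonempty)
    {f g h : ι → ℝ} {s t : ℝ} (hs : 0 ≤ s) (ht : 0 ≤ t)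
    (hfgh : ∀ i ∈ S, f i ≤ s * g i + t * h i) :
    S.sup' hS f ≤ s * S.sup' hS g + t * S.sup' hS h :=
  sup'_le hS f fun i hi => (hfgh i hi).trans <| by
    gcongr
    · exact le_sup' g hi
    · exact le_sup' h hi

theorem sketch_star_metric_convex_general {Ω : Type*} [Fintype Ω] [DecidableEq Ω]
    (φ : (Finset Ω → ℝ) → (Finset Ω → ℝ) → ℝ)
    (hφ : ∀ (x₁ x₂ y₁ y₂ : Finset Ω → ℝ) (l : ℝ), 0 ≤ l → l ≤ 1 →
      φ (fun a => l * x₁ a + (1 - l) * x₂ a) (fun a => l * y₁ a + (1 - l) * y₂ a) ≤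
        l * φ x₁ y₁ + (1 - l) * φ x₂ y₂)
    (p₁ p₂ q₁ q₂ : Ω → ℝ)
    (l : ℝ) (hl0 : 0 ≤ l) (hl1 : l ≤ 1)
    (P : Finset (Finpartition (univ : Finset Ω)))
    (hne : P.Nonempty) :
    P.sup' hne (fun ρ =>
        φ (proj ρ (fun i => l * p₁ i + (1 - l) * p₂ i))
          (proj ρ (fun i => l * q₁ i + (1 - l) * q₂ i))) ≤
      l * P.sup' hne (fun ρ => φ (proj ρ p₁) (proj ρ q₁)) +
      (1 - l) * P.sup' hne (fun ρ => φ (proj ρ p₂) (proj ρ q₂)) :=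
  sup'_le_mul_sup'_add_mul_sup' hne hl0 (sub_nonneg.mpr hl1) fun ρ _ => by
    rw [proj_mul_add_mul, proj_mul_add_mul]
    exact hφ _ _ _ _ l hl0 hl1

/-- Joint convexity is preserved by the Sketch ★-metric. -/
theorem sketch_star_metric_convex {Ω : Type*} [Fintype Ω] [DecidableEq Ω] (k : ℕ)
    (hk : 1 ≤ k) (hcard : k ≤ Fintype.card Ω)
    (φ : (Finset Ω → ℝ) → (Finset Ω → ℝ) → ℝ)
    (hφ : ∀ (x₁ x₂ y₁ y₂ : Finset Ω → ℝ) (l : ℝ), 0 ≤ l → l ≤ 1 →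
      φ (fun a => l * x₁ a + (1 - l) * x₂ a) (fun a => l * y₁ a + (1 - l) * y₂ a) ≤
        l * φ x₁ y₁ + (1 - l) * φ x₂ y₂)
    (p₁ p₂ q₁ q₂ : Ω → ℝ)
    (hp₁0 : ∀ i, 0 ≤ p₁ i) (hp₁1 : ∑ i, p₁ i = 1)
    (hp₂0 : ∀ i, 0 ≤ p₂ i) (hp₂1 : ∑ i, p₂ i = 1)
    (hq₁0 : ∀ i, 0 ≤ q₁ i) (hq₁1 : ∑ i, q₁ i = 1)
    (hq₂0 : ∀ i, 0 ≤ q₂ i) (hq₂1 : ∑ i, q₂ i = 1)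
    (l : ℝ) (hl0 : 0 ≤ l) (hl1 : l ≤ 1)
    (P : Finset (Finpartition (univ : Finset Ω)))
    (hP : ∀ ρ, ρ ∈ P ↔ ρ.parts.card = k) (hne : P.Nonempty) :
    P.sup' hne (fun ρ =>
        φ (proj ρ (fun i => l * p₁ i + (1 - l) * p₂ i))
          (proj ρ (fun i => l * q₁ i + (1 - l) * q₂ i))) ≤
      l * P.sup' hne (fun ρ => φ (proj ρ p₁) (proj ρ q₁)) +
      (1 - l) * P.sup' hne (fun ρ => φ (proj ρ p₂) (proj ρ q₂)) :=
  sketch_star_metric_convex_general φ hφ p₁ p₂ q₁ q₂ l hl0 hl1 P hne
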